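/- arXiv:1904.06795 — 3 statements merged into one kernel-verified Lean document; each statement's English description precedes it below -/
import Mathlib

section
/- (Section 3, equations (3.5)–(3.6)) Let s ≥ 0 and let 𝒫₀' ⊆ 𝒫. For each ζ ∈ 𝒫₀' let (μ(t,ζ))_{t≥s} be a solution of the nonlinear Fokker–Planck equation from time s with μ(s,ζ) = ζ, such that ζ ↦ μ(t,ζ) is Borel measurable for each t ≥ s. Let Γ be a Borel probability measure on 𝒫 concentrated on 𝒫₀' such that ∫_𝒫 ∫_s^t ∫_{ℝ^d}(|b|+‖σ‖²)(r,x,μ(r,ζ)) μ(r,ζ)(dx) dr Γ(dζ) < ∞ for all t ≥ s. Then Γ_t := Γ∘μ(t,·)^{-1} (the pushforward of Γ under ζ ↦ μ(t,ζ)), t ≥ s, is a weakly continuous path in 𝒫(𝒫) which solves the linear Fokker–Planck equation ∂_tΓ_t = 𝐋*_tΓ_t from time s with Γ_s = Γ. -/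
/-!
Along a single solution `μ_t` of the nonlinear equation, the vector `v(t) = (μ_t(h_i))_i` is
`v(s)` plus the indefinite integral of the integrable function `r ↦ (μ_r(L_{r,μ_r} h_i))_i`.
Since `f` is Lipschitz, `f ∘ v` is absolutely continuous and the chain rule holds almost
everywhere, so `F(μ_t) = F(μ_s) + ∫_s^t 𝐋_r F(μ_r) dr`. The joint integrability assumption
dominates `|𝐋_r F(μ(r,ζ))|` by a constant multiple of `∫(|b| + ‖σ‖²) dμ(r,ζ)`, so this identity can
be integrated in `ζ` against `Γ` and Fubini turns it into the linear equation for `Γ_t`.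
Changing `μ(·,ζ)` on a `Γ`-null set makes every path continuous, hence `(t,ζ) ↦ μ(t,ζ)` jointly
measurable, and continuity of `t ↦ Γ_t` is then convergence in law of an a.s. convergent family.
-/

open MeasureTheory Filter Topology Matrix

noncomputable section

abbrev Rd (d : ℕ) : Type := EuclideanSpace ℝ (Fin d)

abbrev Prob (d : ℕ) : Type := ProbabilityMeasure (Rd d)

instance (d : ℕ) : MeasurableSpace (Prob d) := borel _
instance (d : ℕ) : BorelSpace (Prob d) := ⟨rfl⟩

/-- The Kolmogorov operator `L_{t,μ} h (x)`. -/
def kolmOp {d m : ℕ} (b : ℝ → Rd d → Prob d → Rd d)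
    (σ : ℝ → Rd d → Prob d → Matrix (Fin d) (Fin m) ℝ)
    (t : ℝ) (μ : Prob d) (h : Rd d → ℝ) (x : Rd d) : ℝ :=
  (1/2) * ∑ i : Fin d, ∑ j : Fin d,
      (σ t x μ * (σ t x μ)ᵀ) i j *
        fderiv ℝ (fun y => fderiv ℝ h y (EuclideanSpace.single j 1)) x (EuclideanSpace.single i 1)
    + ∑ i : Fin d, b t x μ i * fderiv ℝ h x (EuclideanSpace.single i 1)

/-- `|b| + ‖σ‖²` (Hilbert–Schmidt norm squared) evaluated at `(t,x,μ)`. -/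
def coefIntegrand {d m : ℕ} (b : ℝ → Rd d → Prob d → Rd d)
    (σ : ℝ → Rd d → Prob d → Matrix (Fin d) (Fin m) ℝ)
    (t : ℝ) (μ : Prob d) (x : Rd d) : ℝ :=
  ‖b t x μ‖ + ∑ i : Fin d, ∑ j : Fin m, (σ t x μ i j)^2

/-- `h ∈ C_c²(ℝ^d)`. -/
def IsTestFun {d : ℕ} (h : Rd d → ℝ) : Prop := ContDiff ℝ 2 h ∧ HasCompactSupport h

/-- Data representing a cylinder function `F ∈ ℱC_b²(𝒫)`. -/
structure Cylinder (d : ℕ) where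
  n : ℕ
  npos : 1 ≤ n
  f : (Fin n → ℝ) → ℝ
  h : Fin n → Rd d → ℝ
  f_diff : ContDiff ℝ 1 f
  f_bdd : ∃ C : ℝ, ∀ y, |f y| ≤ C
  f_deriv_bdd : ∃ C : ℝ, ∀ y, ‖fderiv ℝ f y‖ ≤ C
  h_test : ∀ i, IsTestFun (h i)

def Cylinder.eval {d : ℕ} (F : Cylinder d) (μ : Prob d) : ℝ :=
  F.f (fun i => ∫ x, F.h i x ∂(μ.toMeasure))

/-- The linearized Kolmogorov operator `𝐋_t F (μ)` on cylinder functions. -/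
def bigL {d m : ℕ} (b : ℝ → Rd d → Prob d → Rd d)
    (σ : ℝ → Rd d → Prob d → Matrix (Fin d) (Fin m) ℝ)
    (t : ℝ) (F : Cylinder d) (μ : Prob d) : ℝ :=
  ∑ i : Fin F.n,
    fderiv ℝ F.f (fun j => ∫ x, F.h j x ∂(μ.toMeasure)) (Pi.single i 1) *
      ∫ x, kolmOp b σ t μ (F.h i) x ∂(μ.toMeasure)

/-- Solution of the nonlinear Fokker–Planck equation from time `s`. -/
def IsFPSol {d m : ℕ} (b : ℝ → Rd d → Prob d → Rd d)
    (σ : ℝ → Rd d → Prob d → Matrix (Fin d) (Fin m) ℝ)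
    (s : ℝ) (μ : ℝ → Prob d) : Prop :=
  ContinuousOn μ (Set.Ici s) ∧
  (∀ t ≥ s, ∫⁻ r in Set.Icc s t,
      ∫⁻ x, ENNReal.ofReal (coefIntegrand b σ r (μ r) x) ∂((μ r).toMeasure) < ⊤) ∧
  (∀ t ≥ s, ∀ h : Rd d → ℝ, IsTestFun h →
    ∫ x, h x ∂((μ t).toMeasure) = ∫ x, h x ∂((μ s).toMeasure) +
      ∫ r in Set.Icc s t, ∫ x, kolmOp b σ r (μ r) h x ∂((μ r).toMeasure))

/-- The product measure `ν × δ_μ` as a probability measure on `ℝ^d × 𝒫`. -/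
def prodDirac {d : ℕ} (ν μ : Prob d) : ProbabilityMeasure (Rd d × Prob d) :=
  ⟨(ν.toMeasure).prod (Measure.dirac μ), by infer_instance⟩

open scoped ENNReal NNReal
open Set

theorem AbsolutelyContinuousOnInterval.of_dist_le {X : Type*} [PseudoMetricSpace X]
    {f : ℝ → X} {G : ℝ → ℝ} {a b : ℝ} (hG : AbsolutelyContinuousOnInterval G a b) (C : ℝ)
    (h : ∀ x ∈ uIcc a b, ∀ y ∈ uIcc a b, dist (f x) (f y) ≤ C * dist (G x) (G y)) :
    AbsolutelyContinuousOnInterval f a b := by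
  have hlim := Filter.Tendsto.const_mul C hG
  rw [mul_zero] at hlim
  refine squeeze_zero' (.of_forall fun E => Finset.sum_nonneg fun _ _ => dist_nonneg) ?_ hlim
  filter_upwards [mem_inf_of_right (mem_principal_self _)] with E hE
  rw [Finset.mul_sum]
  exact Finset.sum_le_sum fun i hi => h _ (hE.1 i hi).1 _ (hE.1 i hi).2

theorem integral_fderiv_comp_primitive_eq_sub {E : Type*} [NormedAddCommGroup E]
    [NormedSpace ℝ E] [CompleteSpace E] {f : E → ℝ} {K : ℝ≥0} (hf : Differentiable ℝ f)
    (hK : LipschitzWith K f) {g : ℝ → E} {a b : ℝ} (hg : IntervalIntegrable g volume a b)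
    (c : E) :
    ∫ u in a..b, fderiv ℝ f (c + ∫ r in a..u, g r) (g u)
      = f (c + ∫ r in a..b, g r) - f c := by
  set φ : ℝ → ℝ := fun x => f (c + ∫ r in a..x, g r)
  have hφ : AbsolutelyContinuousOnInterval φ a b := by
    refine (hg.norm.absolutelyContinuousOnInterval_intervalIntegral left_mem_uIcc).of_dist_le K
      fun x hx y hy => ?_
    have hx' := hg.mono_set (uIcc_subset_uIcc left_mem_uIcc hx)
    have hy' := hg.mono_set (uIcc_subset_uIcc left_mem_uIcc hy)
    calc dist (φ x) (φ y) ≤ K * dist (c + ∫ r in a..x, g r) (c + ∫ r in a..y, g r) :=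
          hK.dist_le_mul _ _
      _ = K * ‖∫ r in y..x, g r‖ := by
          rw [dist_add_left, dist_eq_norm, intervalIntegral.integral_interval_sub_left hx' hy']
      _ ≤ K * |∫ r in y..x, ‖g r‖| :=
          mul_le_mul_of_nonneg_left (intervalIntegral.norm_integral_le_abs_integral_norm)
            K.coe_nonneg
      _ = K * dist (∫ r in a..x, ‖g r‖) (∫ r in a..y, ‖g r‖) := by
          rw [Real.dist_eq, intervalIntegral.integral_interval_sub_left hx'.norm hy'.norm]
  have hφa : φ a = f c := by simp [φ]
  rw [← hφa, ← hφ.integral_deriv_eq_sub]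
  refine intervalIntegral.integral_congr_ae ?_
  filter_upwards [hg.ae_hasDerivAt_integral] with x hx hxab
  have hv := (hx (uIoc_subset_uIcc hxab) a left_mem_uIcc).const_add c
  exact (((hf _).hasFDerivAt.comp_hasDerivAt x hv).deriv).symm

lemma ContinuousLinearMap.apply_eq_sum_apply_single_mul {ι : Type*} [Fintype ι]
    [DecidableEq ι] (L : (ι → ℝ) →L[ℝ] ℝ) (y : ι → ℝ) :
    L y = ∑ i, L (Pi.single i 1) * y i := by
  conv_lhs => rw [← Finset.univ_sum_single y]
  refine (map_sum L _ _).trans (Finset.sum_congr rfl fun i _ => ?_)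
  have hsingle : Pi.single i (y i) = y i • Pi.single i (1 : ℝ) := by
    rw [← Pi.single_smul', smul_eq_mul, mul_one]
  rw [hsingle, L.map_smul, smul_eq_mul, mul_comm]

lemma enorm_integral_le_mul_lintegral_ofReal {α : Type*} [MeasurableSpace α] {μ : Measure α}
    {f g : α → ℝ} {K : ℝ≥0} (h : ∀ x, |f x| ≤ K * g x) :
    ‖∫ x, f x ∂μ‖ₑ ≤ K * ∫⁻ x, ENNReal.ofReal (g x) ∂μ := by
  rw [← lintegral_const_mul' _ _ ENNReal.coe_ne_top]
  refine (enorm_integral_le_lintegral_enorm f).trans (lintegral_mono fun x => ?_)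
  rw [Real.enorm_eq_ofReal_abs, ← ENNReal.ofReal_coe_nnreal, ← ENNReal.ofReal_mul K.coe_nonneg]
  exact ENNReal.ofReal_le_ofReal (h x)

lemma Matrix.abs_mul_transpose_apply_le {n l : Type*} [Fintype n] [Fintype l]
    (A : Matrix n l ℝ) (i j : n) : |(A * Aᵀ) i j| ≤ ∑ k, ∑ c, A k c ^ 2 := by
  rw [Finset.sum_comm, Matrix.mul_apply]
  refine (Finset.abs_sum_le_sum_abs _ _).trans (Finset.sum_le_sum fun c _ => ?_)
  have hcol : ∀ k, A k c ^ 2 ≤ ∑ k', A k' c ^ 2 := fun k =>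
    Finset.single_le_sum (f := fun k' => A k' c ^ 2) (fun _ _ => sq_nonneg _) (Finset.mem_univ k)
  calc |A i c * Aᵀ c j| ≤ max (A i c ^ 2) (A j c ^ 2) := by
        rw [Matrix.transpose_apply, abs_mul]
        linarith [two_mul_le_add_sq |A i c| |A j c|, sq_abs (A i c), sq_abs (A j c),
          le_max_left (A i c ^ 2) (A j c ^ 2), le_max_right (A i c ^ 2) (A j c ^ 2)]
    _ ≤ ∑ k, A k c ^ 2 := max_le (hcol i) (hcol j)

lemma exists_continuous_measurable_modification {α β : Type*} [MeasurableSpace α]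
    [TopologicalSpace β] [MeasurableSpace β] {ν : Measure α} {P : Set α} (hP : ∀ᵐ a ∂ν, a ∈ P)
    {s : ℝ} {u : ℝ → α → β} (hcont : ∀ a ∈ P, ContinuousOn (fun t => u t a) (Ici s))
    (hmeas : ∀ t ≥ s, Measurable (u t)) :
    ∃ ũ : ℝ → α → β, (∀ t, Measurable (ũ t)) ∧ (∀ a, Continuous fun t => ũ t a) ∧
      ∀ᵐ a ∂ν, a ∈ P ∧ ∀ t ≥ s, ũ t a = u t a := by
  classical
  set S := (toMeasurable ν Pᶜ)ᶜ
  have hSP : S ⊆ P := fun a ha => by_contra fun h => ha (subset_toMeasurable ν Pᶜ h)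
  have hS : ∀ᵐ a ∂ν, a ∈ S := by
    rw [ae_iff]
    simp only [S, Set.mem_compl_iff, not_not, Set.ofPred_mem_eq, measure_toMeasurable]
    exact ae_iff.1 hP
  refine ⟨fun t => S.piecewise (u (max t s)) (u s), fun t => ?_, fun a => ?_, ?_⟩
  · exact (hmeas _ (le_max_right t s)).piecewise (measurableSet_toMeasurable ν Pᶜ).compl
      (hmeas s le_rfl)
  · by_cases ha : a ∈ S
    · simp only [Set.piecewise_eq_of_mem _ _ _ ha]
      exact (hcont a (hSP ha)).comp_continuous (continuous_id.max continuous_const)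
        fun t => le_max_right t s
    · simp only [Set.piecewise_eq_of_notMem _ _ _ ha]
      exact continuous_const
  · filter_upwards [hS] with a ha
    exact ⟨hSP ha, fun t ht => by simp [Set.piecewise_eq_of_mem _ _ _ ha, ht]⟩

lemma integral_map_eq_add_integral_of_ae {Ω P : Type*} [MeasurableSpace Ω] [MeasurableSpace P]
    {Γ : Measure Ω} [SFinite Γ] {u : ℝ → Ω → P} (hu : ∀ r, Measurable (u r)) {s t : ℝ}
    {F : P → ℝ} (hF : Measurable F) (hFs : Integrable (fun ζ => F (u s ζ)) Γ)
    {L : ℝ → P → ℝ} (hL : ∀ r, Measurable (L r))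
    (hLint : Integrable (fun q : Ω × ℝ => L q.2 (u q.2 q.1)) (Γ.prod (volume.restrict (Icc s t))))
    (hpath : ∀ᵐ ζ ∂Γ, F (u t ζ) = F (u s ζ) + ∫ r in Icc s t, L r (u r ζ)) :
    ∫ ξ, F ξ ∂(Γ.map (u t))
      = ∫ ξ, F ξ ∂(Γ.map (u s)) + ∫ r in Icc s t, ∫ ξ, L r ξ ∂(Γ.map (u r)) := by
  have hmap {r : ℝ} {G : P → ℝ} (hG : Measurable G) :
      ∫ ξ, G ξ ∂(Γ.map (u r)) = ∫ ζ, G (u r ζ) ∂Γ :=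
    integral_map (hu r).aemeasurable hG.aestronglyMeasurable
  simp only [hmap hF, hmap (hL _)]
  rw [integral_congr_ae hpath]
  refine (integral_add hFs hLint.integral_prod_left).trans ?_
  congr 1
  exact integral_integral_swap hLint

namespace Prob

variable {d : ℕ}

lemma measurable_toMeasure : Measurable fun ξ : Prob d => (ξ : Measure (Rd d)) := by
  refine .measure_of_isPiSystem_of_isProbabilityMeasure
    (by rw [BorelSpace.measurable_eq (α := Rd d), borel_eq_generateFrom_isClosed])
    isPiSystem_isClosed fun F hF => UpperSemicontinuous.measurable ?_
  exact upperSemicontinuous_iff_limsup_le.2 fun ξ =>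
    ProbabilityMeasure.limsup_measure_closed_le_of_tendsto tendsto_id hF

def toKernel (d : ℕ) : ProbabilityTheory.Kernel (Prob d) (Rd d) :=
  ⟨fun ξ => ξ, measurable_toMeasure⟩

instance : ProbabilityTheory.IsMarkovKernel (toKernel d) := ⟨fun ξ => ξ.2⟩

lemma _root_.Measurable.lintegral_prob {α : Type*} [MeasurableSpace α]
    {f : (α × Prob d) × Rd d → ℝ≥0∞} (hf : Measurable f) :
    Measurable fun p : α × Prob d => ∫⁻ x, f (p, x) ∂p.2 :=
  hf.lintegral_kernel_prod_right' (κ := (toKernel d).prodMkLeft α)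

lemma _root_.MeasureTheory.StronglyMeasurable.integral_prob {α : Type*} [MeasurableSpace α]
    {E : Type*} [NormedAddCommGroup E] [NormedSpace ℝ E]
    {f : (α × Prob d) × Rd d → E} (hf : StronglyMeasurable f) :
    StronglyMeasurable fun p : α × Prob d => ∫ x, f (p, x) ∂p.2 :=
  hf.integral_kernel_prod_right' (κ := (toKernel d).prodMkLeft α)

end Prob

section Bounds

variable {d m : ℕ} (b : ℝ → Rd d → Prob d → Rd d)
    (σ : ℝ → Rd d → Prob d → Matrix (Fin d) (Fin m) ℝ)

lemma coefIntegrand_nonneg (t : ℝ) (μ : Prob d) (x : Rd d) : 0 ≤ coefIntegrand b σ t μ x := by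
  unfold coefIntegrand; positivity

lemma abs_kolmOp_le (t : ℝ) (μ : Prob d) (h : Rd d → ℝ) (x : Rd d) :
    |kolmOp b σ t μ h x| ≤ (∑ i : Fin d, ∑ j : Fin d,
        |fderiv ℝ (fun y => fderiv ℝ h y (EuclideanSpace.single j 1)) x
          (EuclideanSpace.single i 1)|
      + ∑ i : Fin d, |fderiv ℝ h x (EuclideanSpace.single i 1)|) * coefIntegrand b σ t μ x := by
  set D2 := ∑ i : Fin d, ∑ j : Fin d, |fderiv ℝ (fun y => fderiv ℝ h y
    (EuclideanSpace.single j 1)) x (EuclideanSpace.single i 1)|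
  set D1 := ∑ i : Fin d, |fderiv ℝ h x (EuclideanSpace.single i 1)|
  set S := ∑ i : Fin d, ∑ j : Fin m, σ t x μ i j ^ 2
  have hD2 : 0 ≤ D2 := by positivity
  have hdiff : |∑ i : Fin d, ∑ j : Fin d, (σ t x μ * (σ t x μ)ᵀ) i j *
      fderiv ℝ (fun y => fderiv ℝ h y (EuclideanSpace.single j 1)) x
        (EuclideanSpace.single i 1)| ≤ S * D2 := by
    rw [Finset.mul_sum]
    refine (Finset.abs_sum_le_sum_abs _ _).trans (Finset.sum_le_sum fun i _ => ?_)
    rw [Finset.mul_sum]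
    refine (Finset.abs_sum_le_sum_abs _ _).trans (Finset.sum_le_sum fun j _ => ?_)
    rw [abs_mul]
    exact mul_le_mul_of_nonneg_right (Matrix.abs_mul_transpose_apply_le _ i j) (abs_nonneg _)
  have hdrift : |∑ i : Fin d, b t x μ i * fderiv ℝ h x (EuclideanSpace.single i 1)|
      ≤ ‖b t x μ‖ * D1 := by
    rw [Finset.mul_sum]
    refine (Finset.abs_sum_le_sum_abs _ _).trans (Finset.sum_le_sum fun i _ => ?_)
    rw [abs_mul, ← Real.norm_eq_abs (b t x μ i)]
    exact mul_le_mul_of_nonneg_right (PiLp.norm_apply_le _ i) (abs_nonneg _)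
  have hS : 0 ≤ S := by positivity
  unfold kolmOp coefIntegrand
  calc _ ≤ 1 / 2 * (S * D2) + ‖b t x μ‖ * D1 := by
        refine (abs_add_le _ _).trans (add_le_add ?_ hdrift)
        rw [abs_mul, abs_of_pos (by norm_num : (0 : ℝ) < 1 / 2)]
        exact mul_le_mul_of_nonneg_left hdiff (by norm_num)
    _ ≤ (D2 + D1) * (‖b t x μ‖ + S) := by
        nlinarith [mul_nonneg hS hD2, mul_nonneg (norm_nonneg (b t x μ)) hD2,
          mul_nonneg hS (show 0 ≤ D1 by positivity)]

end Bounds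

namespace IsTestFun

variable {d : ℕ} {h : Rd d → ℝ}

lemma contDiff_fderiv_apply (hh : IsTestFun h) (v : Rd d) :
    ContDiff ℝ 1 fun x => fderiv ℝ h x v :=
  (hh.1.fderiv_right le_rfl).clm_apply contDiff_const

lemma continuous_fderiv_apply (hh : IsTestFun h) (v : Rd d) :
    Continuous fun x => fderiv ℝ h x v :=
  (hh.contDiff_fderiv_apply v).continuous

lemma continuous_fderiv_fderiv_apply (hh : IsTestFun h) (v w : Rd d) :
    Continuous fun x => fderiv ℝ (fun y => fderiv ℝ h y w) x v :=
  ((hh.contDiff_fderiv_apply w).continuous_fderiv one_ne_zero).clm_apply continuous_const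

lemma exists_bound_derivs (hh : IsTestFun h) : ∃ C, ∀ x,
    ∑ i : Fin d, ∑ j : Fin d, |fderiv ℝ (fun y => fderiv ℝ h y (EuclideanSpace.single j 1)) x
        (EuclideanSpace.single i 1)|
      + ∑ i : Fin d, |fderiv ℝ h x (EuclideanSpace.single i 1)| ≤ C := by
  have hsupp (v : Rd d) : HasCompactSupport fun x => fderiv ℝ h x v :=
    hh.2.fderiv_apply (𝕜 := ℝ) v
  choose C2 hC2 using fun i j : Fin d =>
    ((hsupp (EuclideanSpace.single j 1)).fderiv_apply (𝕜 := ℝ)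
      (EuclideanSpace.single i 1)).exists_bound_of_continuous
        (hh.continuous_fderiv_fderiv_apply (EuclideanSpace.single i 1) (EuclideanSpace.single j 1))
  choose C1 hC1 using fun i : Fin d =>
    (hsupp (EuclideanSpace.single i 1)).exists_bound_of_continuous
      (hh.continuous_fderiv_apply (EuclideanSpace.single i 1))
  exact ⟨∑ i, ∑ j, C2 i j + ∑ i, C1 i, fun x => add_le_add
    (Finset.sum_le_sum fun i _ => Finset.sum_le_sum fun j _ => hC2 i j x)
    (Finset.sum_le_sum fun i _ => hC1 i x)⟩

lemma exists_abs_kolmOp_le {m : ℕ} (b : ℝ → Rd d → Prob d → Rd d)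
    (σ : ℝ → Rd d → Prob d → Matrix (Fin d) (Fin m) ℝ) (hh : IsTestFun h) :
    ∃ K : ℝ≥0, ∀ t μ x, |kolmOp b σ t μ h x| ≤ K * coefIntegrand b σ t μ x := by
  obtain ⟨C, hC⟩ := hh.exists_bound_derivs
  refine ⟨C.toNNReal, fun t μ x => (abs_kolmOp_le b σ t μ h x).trans ?_⟩
  exact mul_le_mul_of_nonneg_right ((hC x).trans (Real.le_coe_toNNReal C))
    (coefIntegrand_nonneg b σ t μ x)

lemma continuous_integral (hh : IsTestFun h) :
    Continuous fun ξ : Prob d => ∫ x, h x ∂ξ := by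
  obtain ⟨C, hC⟩ := hh.2.exists_bound_of_continuous hh.1.continuous
  exact ProbabilityMeasure.continuous_integral_boundedContinuousFunction
    (.ofNormedAddCommGroup h hh.1.continuous C hC)

end IsTestFun

section Coefficients

variable {d m : ℕ} (b : ℝ → Rd d → Prob d → Rd d)
    (σ : ℝ → Rd d → Prob d → Matrix (Fin d) (Fin m) ℝ)

def MeasurableCoeffs : Prop :=
  Measurable (fun p : ℝ × Rd d × Prob d => b p.1 p.2.1 p.2.2) ∧
    ∀ i j, Measurable (fun p : ℝ × Rd d × Prob d => σ p.1 p.2.1 p.2.2 i j)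

def coefLIntegral (t : ℝ) (ξ : Prob d) : ℝ≥0∞ :=
  ∫⁻ x, ENNReal.ofReal (coefIntegrand b σ t ξ x) ∂ξ

variable {b σ}

lemma MeasurableCoeffs.measurable_coefIntegrand (hbσ : MeasurableCoeffs b σ) :
    Measurable fun q : (ℝ × Prob d) × Rd d => coefIntegrand b σ q.1.1 q.1.2 q.2 := by
  have hr : Measurable fun q : (ℝ × Prob d) × Rd d => (q.1.1, q.2, q.1.2) := by fun_prop
  have hb : Measurable fun q : (ℝ × Prob d) × Rd d => b q.1.1 q.2 q.1.2 := hbσ.1.comp hr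
  have hσ (i j) : Measurable fun q : (ℝ × Prob d) × Rd d => σ q.1.1 q.2 q.1.2 i j :=
    (hbσ.2 i j).comp hr
  exact hb.norm.add (Finset.measurable_sum _ fun i _ =>
    Finset.measurable_sum _ fun j _ => (hσ i j).pow_const 2)

lemma MeasurableCoeffs.measurable_kolmOp (hbσ : MeasurableCoeffs b σ) {h : Rd d → ℝ}
    (hh : IsTestFun h) :
    Measurable fun q : (ℝ × Prob d) × Rd d => kolmOp b σ q.1.1 q.1.2 h q.2 := by
  have hr : Measurable fun q : (ℝ × Prob d) × Rd d => (q.1.1, q.2, q.1.2) := by fun_prop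
  have hb (i) : Measurable fun q : (ℝ × Prob d) × Rd d => b q.1.1 q.2 q.1.2 i :=
    (measurable_pi_apply i).comp ((PiLp.continuous_ofLp 2 _).measurable.comp (hbσ.1.comp hr))
  have hσ (i j) : Measurable fun q : (ℝ × Prob d) × Rd d => σ q.1.1 q.2 q.1.2 i j :=
    (hbσ.2 i j).comp hr
  have h1 (i : Fin d) : Measurable fun x => fderiv ℝ h x (EuclideanSpace.single i 1) :=
    (hh.continuous_fderiv_apply _).measurable
  have h2 (i j : Fin d) : Measurable fun x =>
      fderiv ℝ (fun y => fderiv ℝ h y (EuclideanSpace.single j 1)) x (EuclideanSpace.single i 1) :=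
    (hh.continuous_fderiv_fderiv_apply _ _).measurable
  simp only [kolmOp, Matrix.mul_apply, Matrix.transpose_apply]
  refine (Finset.measurable_sum _ fun i _ => Finset.measurable_sum _ fun j _ => ?_).const_mul _
    |>.add (Finset.measurable_sum _ fun i _ => (hb i).mul ((h1 i).comp measurable_snd))
  exact (Finset.measurable_sum _ fun k _ => (hσ i k).mul (hσ j k)).mul
    ((h2 i j).comp measurable_snd)

lemma MeasurableCoeffs.measurable_coefLIntegral (hbσ : MeasurableCoeffs b σ) :
    Measurable fun p : ℝ × Prob d => coefLIntegral b σ p.1 p.2 :=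
  hbσ.measurable_coefIntegrand.ennreal_ofReal.lintegral_prob

lemma MeasurableCoeffs.measurable_integral_kolmOp (hbσ : MeasurableCoeffs b σ)
    {h : Rd d → ℝ} (hh : IsTestFun h) :
    Measurable fun p : ℝ × Prob d => ∫ x, kolmOp b σ p.1 p.2 h x ∂p.2 :=
  (hbσ.measurable_kolmOp hh).stronglyMeasurable.integral_prob.measurable

lemma enorm_integral_kolmOp_le {h : Rd d → ℝ} {K : ℝ≥0}
    (hK : ∀ t μ x, |kolmOp b σ t μ h x| ≤ K * coefIntegrand b σ t μ x) (t : ℝ) (ξ : Prob d) :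
    ‖∫ x, kolmOp b σ t ξ h x ∂ξ‖ₑ ≤ K * coefLIntegral b σ t ξ :=
  enorm_integral_le_mul_lintegral_ofReal (hK t ξ)

lemma MeasurableCoeffs.setLIntegral_lintegral_map_coefLIntegral
    (hbσ : MeasurableCoeffs b σ) {Ω : Type*} [MeasurableSpace Ω] {Γ : Measure Ω} [SFinite Γ]
    {u : ℝ → Ω → Prob d} (hu : Measurable (Function.uncurry u)) (s t : ℝ) :
    ∫⁻ r in Icc s t, ∫⁻ ξ, coefLIntegral b σ r ξ ∂(Γ.map (u r))
      = ∫⁻ ζ, (∫⁻ r in Icc s t, coefLIntegral b σ r (u r ζ)) ∂Γ := by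
  have hq : Measurable fun q : ℝ × Ω => (q.1, u q.1 q.2) := measurable_fst.prodMk hu
  refine (lintegral_congr fun r => lintegral_map (hbσ.measurable_coefLIntegral.comp
    measurable_prodMk_left) (hu.comp measurable_prodMk_left)).trans ?_
  exact lintegral_lintegral_swap (hbσ.measurable_coefLIntegral.comp hq).aemeasurable

end Coefficients

namespace Cylinder

variable {d m : ℕ} {b : ℝ → Rd d → Prob d → Rd d}
    {σ : ℝ → Rd d → Prob d → Matrix (Fin d) (Fin m) ℝ} (F : Cylinder d)

lemma continuous_integrals : Continuous fun ξ : Prob d => fun i => ∫ x, F.h i x ∂ξ :=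
  continuous_pi fun i => (F.h_test i).continuous_integral

lemma continuous_eval : Continuous F.eval :=
  F.f_diff.continuous.comp F.continuous_integrals

lemma measurable_bigL (hbσ : MeasurableCoeffs b σ) :
    Measurable fun p : ℝ × Prob d => bigL b σ p.1 F p.2 := by
  have hDf := (F.f_diff.continuous_fderiv one_ne_zero).comp F.continuous_integrals
  have hI := fun i => hbσ.measurable_integral_kolmOp (F.h_test i)
  unfold bigL
  refine Finset.measurable_sum _ fun i _ => Measurable.mul ?_ (hI i)
  exact ((hDf.clm_apply continuous_const).measurable).comp measurable_snd

lemma exists_enorm_bigL_le (b : ℝ → Rd d → Prob d → Rd d)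
    (σ : ℝ → Rd d → Prob d → Matrix (Fin d) (Fin m) ℝ) :
    ∃ C : ℝ≥0, ∀ r ξ, ‖bigL b σ r F ξ‖ₑ ≤ C * coefLIntegral b σ r ξ := by
  obtain ⟨Cf, hCf⟩ := F.f_deriv_bdd
  choose K hK using fun i => (F.h_test i).exists_abs_kolmOp_le b σ
  refine ⟨∑ i, Cf.toNNReal * K i, fun r ξ => ?_⟩
  have hDf (y : Fin F.n → ℝ) (i : Fin F.n) :
      ‖fderiv ℝ F.f y (Pi.single i 1)‖ₑ ≤ Cf.toNNReal := by
    rw [← ofReal_norm]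
    refine ENNReal.ofReal_le_ofReal ((ContinuousLinearMap.le_opNorm _ _).trans ?_)
    simpa [Pi.norm_single] using hCf y
  unfold bigL
  push_cast
  rw [Finset.sum_mul]
  refine (enorm_sum_le _ _).trans (Finset.sum_le_sum fun i _ => ?_)
  rw [enorm_mul, mul_assoc]
  exact mul_le_mul' (hDf _ i) (enorm_integral_kolmOp_le (hK i) r ξ)

lemma exists_lipschitzWith : ∃ K, LipschitzWith K F.f := by
  obtain ⟨C, hC⟩ := F.f_deriv_bdd
  exact ⟨C.toNNReal, lipschitzWith_of_nnnorm_fderiv_le (F.f_diff.differentiable one_ne_zero)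
    fun y => by
      rw [← NNReal.coe_le_coe, coe_nnnorm]
      exact (hC y).trans (Real.le_coe_toNNReal C)⟩

variable {Ω : Type*} [MeasurableSpace Ω] {Γ : Measure Ω}

lemma integrable_eval_comp [IsFiniteMeasure Γ] {u : Ω → Prob d} (hu : Measurable u) :
    Integrable (fun ζ => F.eval (u ζ)) Γ := by
  obtain ⟨C, hC⟩ := F.f_bdd
  exact .of_bound (F.continuous_eval.measurable.comp hu).aestronglyMeasurable C
    (.of_forall fun ζ => hC _)

lemma integrable_bigL_comp [SFinite Γ] (hbσ : MeasurableCoeffs b σ) {u : ℝ → Ω → Prob d}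
    (hu : Measurable (Function.uncurry u)) {s t : ℝ}
    (hfin : ∫⁻ ζ, (∫⁻ r in Icc s t, coefLIntegral b σ r (u r ζ)) ∂Γ < ⊤) :
    Integrable (fun q : Ω × ℝ => bigL b σ q.2 F (u q.2 q.1))
      (Γ.prod (volume.restrict (Icc s t))) := by
  have hq : Measurable fun q : Ω × ℝ => (q.2, u q.2 q.1) :=
    measurable_snd.prodMk (hu.comp measurable_swap)
  obtain ⟨C, hC⟩ := F.exists_enorm_bigL_le b σ
  refine ⟨((F.measurable_bigL hbσ).comp hq).aestronglyMeasurable, ?_⟩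
  calc ∫⁻ q, ‖bigL b σ q.2 F (u q.2 q.1)‖ₑ ∂(Γ.prod (volume.restrict (Icc s t)))
      ≤ ∫⁻ q, C * coefLIntegral b σ q.2 (u q.2 q.1) ∂(Γ.prod (volume.restrict (Icc s t))) :=
        lintegral_mono fun q => hC _ _
    _ = C * ∫⁻ ζ, (∫⁻ r in Icc s t, coefLIntegral b σ r (u r ζ)) ∂Γ := by
        rw [lintegral_const_mul' _ _ ENNReal.coe_ne_top]
        exact congrArg _ (lintegral_prod _ (hbσ.measurable_coefLIntegral.comp hq).aemeasurable)
    _ < ⊤ := ENNReal.mul_lt_top ENNReal.coe_lt_top hfin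

end Cylinder

namespace IsFPSol

variable {d m : ℕ} {b : ℝ → Rd d → Prob d → Rd d}
    {σ : ℝ → Rd d → Prob d → Matrix (Fin d) (Fin m) ℝ} {s t : ℝ} {ν : ℝ → Prob d}

lemma integrableOn_integral_kolmOp (hbσ : MeasurableCoeffs b σ) (hν : IsFPSol b σ s ν)
    (hst : s ≤ t) {h : Rd d → ℝ} (hh : IsTestFun h) :
    IntegrableOn (fun r => ∫ x, kolmOp b σ r (ν r) h x ∂(ν r)) (Icc s t) := by
  obtain ⟨K, hK⟩ := hh.exists_abs_kolmOp_le b σ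
  have hpath : AEMeasurable (fun r => (r, ν r)) (volume.restrict (Icc s t)) :=
    (continuousOn_id.prodMk (hν.1.mono Icc_subset_Ici_self)).aemeasurable measurableSet_Icc
  refine ⟨((hbσ.measurable_integral_kolmOp hh).comp_aemeasurable hpath).aestronglyMeasurable,
    ?_⟩
  calc ∫⁻ r in Icc s t, ‖∫ x, kolmOp b σ r (ν r) h x ∂(ν r)‖ₑ
      ≤ ∫⁻ r in Icc s t, K * coefLIntegral b σ r (ν r) :=
        lintegral_mono fun r => enorm_integral_kolmOp_le hK r (ν r)
    _ = K * ∫⁻ r in Icc s t, coefLIntegral b σ r (ν r) :=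
        lintegral_const_mul' _ _ ENNReal.coe_ne_top
    _ < ⊤ := ENNReal.mul_lt_top ENNReal.coe_lt_top (hν.2.1 t hst)

lemma eval_eq_add_integral_bigL (hbσ : MeasurableCoeffs b σ) (hν : IsFPSol b σ s ν)
    (hst : s ≤ t) (F : Cylinder d) :
    F.eval (ν t) = F.eval (ν s) + ∫ r in Icc s t, bigL b σ r F (ν r) := by
  set v : ℝ → Fin F.n → ℝ := fun u i => ∫ x, F.h i x ∂(ν u)
  set g : ℝ → Fin F.n → ℝ := fun r i => ∫ x, kolmOp b σ r (ν r) (F.h i) x ∂(ν r)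
  have hg {u : ℝ} (hu : s ≤ u) (i : Fin F.n) : IntegrableOn (fun r => g r i) (Icc s u) :=
    hν.integrableOn_integral_kolmOp hbσ hu (F.h_test i)
  have hv {u : ℝ} (hu : s ≤ u) : v u = v s + ∫ r in s..u, g r := by
    funext i
    rw [Pi.add_apply, intervalIntegral.integral_of_le hu, ← integral_Icc_eq_integral_Ioc,
      eval_integral (hg hu) i]
    exact hν.2.2 u hu (F.h i) (F.h_test i)
  obtain ⟨K, hK⟩ := F.exists_lipschitzWith
  have hFTC := integral_fderiv_comp_primitive_eq_sub (F.f_diff.differentiable one_ne_zero) hK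
    ((intervalIntegrable_iff_integrableOn_Icc_of_le hst).2 (Integrable.of_eval (hg hst))) (v s)
  rw [← hv hst, intervalIntegral.integral_congr (g := fun r => bigL b σ r F (ν r)) ?_,
    intervalIntegral.integral_of_le hst, ← integral_Icc_eq_integral_Ioc] at hFTC
  · unfold Cylinder.eval
    linarith
  · intro r hr
    rw [uIcc_of_le hst] at hr
    dsimp only
    rw [← hv hr.1, ContinuousLinearMap.apply_eq_sum_apply_single_mul]
    rfl

end IsFPSol

theorem pushforward_solves_linear_FP_general {d m : ℕ}
    (b : ℝ → Rd d → Prob d → Rd d)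
    (σ : ℝ → Rd d → Prob d → Matrix (Fin d) (Fin m) ℝ)
    (hb : Measurable (fun p : ℝ × Rd d × Prob d => b p.1 p.2.1 p.2.2))
    (hσ : ∀ i j, Measurable (fun p : ℝ × Rd d × Prob d => σ p.1 p.2.1 p.2.2 i j))
    (s : ℝ) (P0' : Set (Prob d))
    (μ : ℝ → Prob d → Prob d)
    (hsol : ∀ ζ ∈ P0', IsFPSol b σ s (fun t => μ t ζ) ∧ μ s ζ = ζ)
    (hmeas : ∀ t ≥ s, Measurable (fun ζ => μ t ζ))
    (Γ : ProbabilityMeasure (Prob d))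
    (hconc : ∀ᵐ ζ ∂Γ.toMeasure, ζ ∈ P0')
    (hint : ∀ t ≥ s, ∫⁻ ζ, (∫⁻ r in Set.Icc s t,
        ∫⁻ x, ENNReal.ofReal (coefIntegrand b σ r (μ r ζ) x) ∂((μ r ζ).toMeasure))
          ∂Γ.toMeasure < ⊤) :
    ∃ Γp : ℝ → ProbabilityMeasure (Prob d),
      (∀ t ≥ s, (Γp t).toMeasure = Γ.toMeasure.map (fun ζ => μ t ζ)) ∧
      Γp s = Γ ∧
      ContinuousOn Γp (Set.Ici s) ∧
      (∀ t ≥ s, ∫⁻ r in Set.Icc s t, ∫⁻ ξ,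
          ∫⁻ x, ENNReal.ofReal (coefIntegrand b σ r ξ x) ∂(ξ.toMeasure)
            ∂((Γp r).toMeasure) < ⊤) ∧
      (∀ F : Cylinder d, ∀ t ≥ s,
        ∫ ξ, F.eval ξ ∂((Γp t).toMeasure)
          = ∫ ξ, F.eval ξ ∂((Γp s).toMeasure)
            + ∫ r in Set.Icc s t, ∫ ξ, bigL b σ r F ξ ∂((Γp r).toMeasure)) := by
  have hbσ : MeasurableCoeffs b σ := ⟨hb, hσ⟩
  obtain ⟨ν, hνm, hνc, hν⟩ :=
    exists_continuous_measurable_modification hconc (fun ζ hζ => (hsol ζ hζ).1.1) hmeas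
  have hjoint : Measurable (Function.uncurry ν) :=
    measurable_uncurry_of_continuous_of_measurable hνc hνm
  have hfin (t : ℝ) (ht : t ≥ s) :
      ∫⁻ ζ, (∫⁻ r in Icc s t, coefLIntegral b σ r (ν r ζ)) ∂Γ.toMeasure < ⊤ := by
    refine lt_of_eq_of_lt (lintegral_congr_ae ?_) (hint t ht)
    filter_upwards [hν] with ζ hζ
    exact setLIntegral_congr_fun measurableSet_Icc fun r hr => by rw [hζ.2 r hr.1]; rfl
  refine ⟨fun t => Γ.map (hνm t).aemeasurable, fun t ht => ?_, ?_, ?_,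
    fun t ht => (hbσ.setLIntegral_lintegral_map_coefLIntegral hjoint s t).trans_lt (hfin t ht),
    fun F t ht => ?_⟩
  · exact Measure.map_congr (hν.mono fun ζ hζ => hζ.2 t ht)
  · refine Subtype.ext ((Measure.map_congr (g := id) ?_).trans Measure.map_id)
    filter_upwards [hν] with ζ hζ
    rw [hζ.2 s le_rfl, (hsol ζ hζ.1).2, id]
  · refine (continuous_iff_continuousAt.2 fun t => ?_).continuousOn
    exact (tendstoInDistribution_of_ae_tendsto (fun r => (hνm r).aemeasurable)
      (hνm t).aemeasurable (.of_forall fun ζ => (hνc ζ).continuousAt)).tendsto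
  · refine integral_map_eq_add_integral_of_ae hνm F.continuous_eval.measurable
      (F.integrable_eval_comp (hνm s))
      (fun r => (F.measurable_bigL hbσ).comp measurable_prodMk_left)
      (F.integrable_bigL_comp hbσ hjoint (hfin t ht)) ?_
    filter_upwards [hν] with ζ hζ
    rw [hζ.2 t ht, hζ.2 s le_rfl, setIntegral_congr_fun measurableSet_Icc
      fun r hr => congrArg (bigL b σ r F) (hζ.2 r hr.1)]
    exact (hsol ζ hζ.1).1.eval_eq_add_integral_bigL hbσ ht F

/-- **Section 3, (3.5)–(3.6).** If for each `ζ ∈ 𝒫₀'` the path `μ(·,ζ)` solves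
the nonlinear Fokker–Planck equation from time `s` with `μ(s,ζ) = ζ`, measurably in `ζ`, and
`Γ` is a probability measure on `𝒫` concentrated on `𝒫₀'` satisfying the joint integrability
condition, then the pushforwards `Γ_t := Γ ∘ μ(t,·)⁻¹` form a weakly continuous path in
`𝒫(𝒫)` solving the linear Fokker–Planck equation `∂_t Γ_t = 𝐋*_t Γ_t` from time `s`
with `Γ_s = Γ`. -/
theorem pushforward_solves_linear_FP {d m : ℕ} (hd : 1 ≤ d) (hm : 1 ≤ m)
    (b : ℝ → Rd d → Prob d → Rd d)
    (σ : ℝ → Rd d → Prob d → Matrix (Fin d) (Fin m) ℝ)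
    (hb : Measurable (fun p : ℝ × Rd d × Prob d => b p.1 p.2.1 p.2.2))
    (hσ : ∀ i j, Measurable (fun p : ℝ × Rd d × Prob d => σ p.1 p.2.1 p.2.2 i j))
    (s : ℝ) (hs : 0 ≤ s) (P0' : Set (Prob d))
    (μ : ℝ → Prob d → Prob d)
    (hsol : ∀ ζ ∈ P0', IsFPSol b σ s (fun t => μ t ζ) ∧ μ s ζ = ζ)
    (hmeas : ∀ t ≥ s, Measurable (fun ζ => μ t ζ))
    (Γ : ProbabilityMeasure (Prob d))
    (hconc : ∀ᵐ ζ ∂Γ.toMeasure, ζ ∈ P0')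
    (hint : ∀ t ≥ s, ∫⁻ ζ, (∫⁻ r in Set.Icc s t,
        ∫⁻ x, ENNReal.ofReal (coefIntegrand b σ r (μ r ζ) x) ∂((μ r ζ).toMeasure))
          ∂Γ.toMeasure < ⊤) :
    ∃ Γp : ℝ → ProbabilityMeasure (Prob d),
      (∀ t ≥ s, (Γp t).toMeasure = Γ.toMeasure.map (fun ζ => μ t ζ)) ∧
      Γp s = Γ ∧
      ContinuousOn Γp (Set.Ici s) ∧
      (∀ t ≥ s, ∫⁻ r in Set.Icc s t, ∫⁻ ξ,
          ∫⁻ x, ENNReal.ofReal (coefIntegrand b σ r ξ x) ∂(ξ.toMeasure)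
            ∂((Γp r).toMeasure) < ⊤) ∧
      (∀ F : Cylinder d, ∀ t ≥ s,
        ∫ ξ, F.eval ξ ∂((Γp t).toMeasure)
          = ∫ ξ, F.eval ξ ∂((Γp s).toMeasure)
            + ∫ r in Set.Icc s t, ∫ ξ, bigL b σ r F ξ ∂((Γp r).toMeasure)) :=
  pushforward_solves_linear_FP_general b σ hb hσ s P0' μ hsol hmeas Γ hconc hint
end
end

section
/- (Proposition 4.8, Chapman–Kolmogorov) The family 𝐏_{s,t}(x,ζ;·) := ν_{s,t}^{ζ,δ_x} × δ_{μ_{s,t}^ζ}, 0 ≤ s ≤ t, (x,ζ) ∈ ℝ^d×𝒫₀, is a Markov transition kernel on ℝ^d×𝒫₀, i.e.: (C₁) for every 0 ≤ s ≤ t and every Borel set A ⊆ ℝ^d×𝒫₀ the map (x,ζ) ↦ 𝐏_{s,t}(x,ζ;A) is Borel measurable, and 𝐏_{s,s}(x,ζ;·) = δ_{(x,ζ)} (the Dirac measure at (x,ζ)); (C₂) the Chapman–Kolmogorov equations hold: 𝐏_{s,t}(x,ζ;·) = ∫_{ℝ^d×𝒫₀} 𝐏_{r,t}(y,μ;·)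 𝐏_{s,r}(x,ζ; dy,dμ) for all 0 ≤ s < r < t and all (x,ζ) ∈ ℝ^d×𝒫₀. -/
/-! Since `ν × δ_μ` sees a set `A` only through its slice at `μ`, everything reduces to
statements about `ν`. Measurability holds because, for the weak topology, `ν ↦ ν G` is lower
semicontinuous for open `G`, so the inclusion of `𝒫` into the Giry space of measures is Borel
measurable. For
Chapman–Kolmogorov, slice `A` at `μ_{s,t}^ζ`, apply the mixing property, and use the flow property
to see that the integrand is `𝐏_{r,t}` evaluated at `(y, μ_{s,r}^ζ)`, the only points charged by
`𝐏_{s,r}(x,ζ;·)`. -/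

open MeasureTheory Filter Topology Matrix

noncomputable section

theorem ProbabilityMeasure.measurable_toMeasure_of_borel {Ω : Type*} [TopologicalSpace Ω]
    [MeasurableSpace Ω] [BorelSpace Ω] [HasOuterApproxClosed Ω] :
    Measurable[borel (ProbabilityMeasure Ω)]
      (fun ν : ProbabilityMeasure Ω => (ν : Measure Ω)) := by
  borelize (ProbabilityMeasure Ω)
  refine .measure_of_isPiSystem_of_isProbabilityMeasure BorelSpace.measurable_eq
    isPiSystem_isOpen fun G hG => ?_
  refine LowerSemicontinuous.measurable (lowerSemicontinuous_iff_le_liminf.mpr fun ν => ?_)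
  exact ProbabilityMeasure.le_liminf_measure_open_of_tendsto tendsto_id hG

theorem Measurable.prod_dirac {α X Z : Type*} [MeasurableSpace α] [MeasurableSpace X]
    [MeasurableSpace Z] {μ : α → ProbabilityMeasure X} (hμ : Measurable fun a => (μ a : Measure X))
    {g : α → Z} (hg : Measurable g) :
    Measurable fun a => (μ a : Measure X).prod (Measure.dirac (g a)) := by
  refine .measure_of_isPiSystem_of_isProbabilityMeasure generateFrom_prod.symm isPiSystem_prod ?_
  rintro _ ⟨A, hA, B, hB, rfl⟩
  simp_rw [Measure.prod_prod, Measure.dirac_apply' _ hB]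
  exact (Measure.measurable_coe hA |>.comp hμ).mul ((measurable_one.indicator hB).comp hg)

theorem Measure.prod_dirac_apply {X Z : Type*} [MeasurableSpace X] [MeasurableSpace Z]
    (μ : Measure X) [SFinite μ] (z : Z) {A : Set (X × Z)} (hA : MeasurableSet A) :
    μ.prod (Measure.dirac z) A = μ ((fun x => (x, z)) ⁻¹' A) := by
  rw [Measure.prod_dirac, Measure.map_apply measurable_prodMk_right hA]

theorem lintegral_prod_dirac {X Z : Type*} [MeasurableSpace X] [MeasurableSpace Z]
    (μ : Measure X) [SFinite μ] (z : Z) {f : X × Z → ENNReal} (hf : Measurable f) :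
    ∫⁻ p, f p ∂μ.prod (Measure.dirac z) = ∫⁻ x, f (x, z) ∂μ := by
  rw [Measure.prod_dirac, lintegral_map hf measurable_prodMk_right]

theorem markov_transition_kernel_general {d : ℕ}
    (P0 : Set (Prob d))
    (M : ℝ → ℝ → Prob d → Prob d) (N : ℝ → ℝ → Prob d → Rd d → Prob d)
    (hM_init : ∀ s ≥ (0:ℝ), ∀ ζ ∈ P0, M s s ζ = ζ)
    (hN_init : ∀ s ≥ (0:ℝ), ∀ ζ ∈ P0, ∀ x : Rd d,
      (N s s ζ x).toMeasure = Measure.dirac x)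
    (hM_meas : ∀ s t : ℝ, 0 ≤ s → s ≤ t → Measurable (fun ζ => M s t ζ))
    (hN_meas : ∀ s t : ℝ, 0 ≤ s → s ≤ t →
      Measurable (fun p : Rd d × Prob d => N s t p.2 p.1))
    (hflow : ∀ s r t : ℝ, 0 ≤ s → s ≤ r → r ≤ t → ∀ ζ ∈ P0,
      M r t (M s r ζ) = M s t ζ)
    (hmix : ∀ s r t : ℝ, 0 ≤ s → s ≤ r → r ≤ t → ∀ ζ ∈ P0, ∀ x : Rd d,
      ∀ A : Set (Rd d), MeasurableSet A →
        (N s t ζ x).toMeasure A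
          = ∫⁻ y, (N r t (M s r ζ) y).toMeasure A ∂((N s r ζ x).toMeasure)) :
    -- (C₁): measurability in `(x,ζ)` ...
    (∀ s t : ℝ, 0 ≤ s → s ≤ t → ∀ A : Set (Rd d × Prob d), MeasurableSet A →
        Measurable (fun p : Rd d × Prob d => (prodDirac (N s t p.2 p.1) (M s t p.2)).toMeasure A)) ∧
    -- ... and `𝐏_{s,s}(x,ζ;·) = δ_{(x,ζ)}`
    (∀ s ≥ (0:ℝ), ∀ x : Rd d, ∀ ζ ∈ P0,
        (prodDirac (N s s ζ x) (M s s ζ)).toMeasure = Measure.dirac (x, ζ)) ∧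
    -- (C₂): Chapman–Kolmogorov equations
    (∀ s r t : ℝ, 0 ≤ s → s < r → r < t → ∀ x : Rd d, ∀ ζ ∈ P0,
        ∀ A : Set (Rd d × Prob d), MeasurableSet A →
          (prodDirac (N s t ζ x) (M s t ζ)).toMeasure A
            = ∫⁻ p : Rd d × Prob d, (prodDirac (N r t p.2 p.1) (M r t p.2)).toMeasure A
                ∂((prodDirac (N s r ζ x) (M s r ζ)).toMeasure)) := by
  have measurable_kernel : ∀ s t : ℝ, 0 ≤ s → s ≤ t → ∀ A : Set (Rd d × Prob d),
      MeasurableSet A → Measurable (fun p : Rd d × Prob d =>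
        (prodDirac (N s t p.2 p.1) (M s t p.2)).toMeasure A) := fun s t hs hst A hA =>
    (Measure.measurable_coe hA).comp <|
      (ProbabilityMeasure.measurable_toMeasure_of_borel.comp (hN_meas s t hs hst)).prod_dirac
        ((hM_meas s t hs hst).comp measurable_snd)
  refine ⟨measurable_kernel, fun s hs x ζ hζ => ?_, fun s r t hs hsr hrt x ζ hζ A hA => ?_⟩
  · simp only [prodDirac, ProbabilityMeasure.coe_mk, hN_init s hs ζ hζ, hM_init s hs ζ hζ,
      Measure.dirac_prod_dirac]
  · have hB : MeasurableSet ((fun y : Rd d => (y, M s t ζ)) ⁻¹' A) := measurable_prodMk_right hA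
    calc (prodDirac (N s t ζ x) (M s t ζ)).toMeasure A
        = ∫⁻ y, (N r t (M s r ζ) y).toMeasure ((fun y => (y, M s t ζ)) ⁻¹' A)
            ∂(N s r ζ x).toMeasure := by
          rw [← hmix s r t hs hsr.le hrt.le ζ hζ x _ hB]
          exact Measure.prod_dirac_apply _ _ hA
      _ = ∫⁻ y, (prodDirac (N r t (M s r ζ) y) (M r t (M s r ζ))).toMeasure A
            ∂(N s r ζ x).toMeasure := by
          simp only [prodDirac, ProbabilityMeasure.coe_mk, Measure.prod_dirac_apply _ _ hA,
            hflow s r t hs hsr.le hrt.le ζ hζ]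
      _ = _ := (lintegral_prod_dirac _ _ (measurable_kernel r t (hs.trans hsr.le) hrt.le A hA)).symm

/-- **Proposition 4.8.** Given the flows `μ_{s,t}^ζ` (written `M s t ζ`) and
`ν_{s,t}^{ζ,δ_x}` (written `N s t ζ x`) with the initial, measurability, flow and mixing
properties, the family `𝐏_{s,t}(x,ζ;·) := ν_{s,t}^{ζ,δ_x} × δ_{μ_{s,t}^ζ}` is a Markov
transition kernel on `ℝ^d × 𝒫₀`: (C₁) it is Borel measurable in `(x,ζ)` and satisfies
`𝐏_{s,s}(x,ζ;·) = δ_{(x,ζ)}`; (C₂) the Chapman–Kolmogorov equations hold. -/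
theorem markov_transition_kernel {d : ℕ} (hd : 1 ≤ d)
    (P0 : Set (Prob d)) (hP0 : MeasurableSet P0)
    (M : ℝ → ℝ → Prob d → Prob d) (N : ℝ → ℝ → Prob d → Rd d → Prob d)
    (hM_mem : ∀ s t : ℝ, 0 ≤ s → s ≤ t → ∀ ζ ∈ P0, M s t ζ ∈ P0)
    (hM_init : ∀ s ≥ (0:ℝ), ∀ ζ ∈ P0, M s s ζ = ζ)
    (hN_init : ∀ s ≥ (0:ℝ), ∀ ζ ∈ P0, ∀ x : Rd d,
      (N s s ζ x).toMeasure = Measure.dirac x)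
    (hM_meas : ∀ s t : ℝ, 0 ≤ s → s ≤ t → Measurable (fun ζ => M s t ζ))
    (hN_meas : ∀ s t : ℝ, 0 ≤ s → s ≤ t →
      Measurable (fun p : Rd d × Prob d => N s t p.2 p.1))
    (hflow : ∀ s r t : ℝ, 0 ≤ s → s ≤ r → r ≤ t → ∀ ζ ∈ P0,
      M r t (M s r ζ) = M s t ζ)
    (hmix : ∀ s r t : ℝ, 0 ≤ s → s ≤ r → r ≤ t → ∀ ζ ∈ P0, ∀ x : Rd d,
      ∀ A : Set (Rd d), MeasurableSet A →
        (N s t ζ x).toMeasure A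
          = ∫⁻ y, (N r t (M s r ζ) y).toMeasure A ∂((N s r ζ x).toMeasure)) :
    -- (C₁): measurability in `(x,ζ)` ...
    (∀ s t : ℝ, 0 ≤ s → s ≤ t → ∀ A : Set (Rd d × Prob d), MeasurableSet A →
        Measurable (fun p : Rd d × Prob d => (prodDirac (N s t p.2 p.1) (M s t p.2)).toMeasure A)) ∧
    -- ... and `𝐏_{s,s}(x,ζ;·) = δ_{(x,ζ)}`
    (∀ s ≥ (0:ℝ), ∀ x : Rd d, ∀ ζ ∈ P0,
        (prodDirac (N s s ζ x) (M s s ζ)).toMeasure = Measure.dirac (x, ζ)) ∧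
    -- (C₂): Chapman–Kolmogorov equations
    (∀ s r t : ℝ, 0 ≤ s → s < r → r < t → ∀ x : Rd d, ∀ ζ ∈ P0,
        ∀ A : Set (Rd d × Prob d), MeasurableSet A →
          (prodDirac (N s t ζ x) (M s t ζ)).toMeasure A
            = ∫⁻ p : Rd d × Prob d, (prodDirac (N r t p.2 p.1) (M r t p.2)).toMeasure A
                ∂((prodDirac (N s r ζ x) (M s r ζ)).toMeasure)) :=
  markov_transition_kernel_general P0 M N hM_init hN_init hM_meas hN_meas hflow hmix
end
end

section
/- (Appendix, well-definedness of the intrinsic gradient ∇^𝒫) Let n, l ≥ 1, f ∈ C_b¹(ℝⁿ), g ∈ C_b¹(ℝˡ), h₁,…,hₙ, k₁,…,k_l ∈ C_c²(ℝ^d), and suppose f(μ(h₁),…,μ(hₙ)) = g(μ(k₁),…,μ(k_l)) for all μ ∈ 𝒫 (two representations of the same cylinder function F). Then for every μ ∈ 𝒫, Σ_{i=1}^n (∂_i f)(μ(h₁),…,μ(hₙ)) ∇h_i(x) = Σ_{j=1}^l (∂_j g)(μ(k₁),…,μ(k_l)) ∇k_j(x) for μ-almost every x ∈ ℝ^d;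 i.e. the intrinsic gradient ∇^𝒫F(μ) ∈ L²(ℝ^d→ℝ^d,μ) is independent of the chosen representation of F. -/
open MeasureTheory Filter Topology

noncomputable section

/-!
Perturbing `μ` towards a Dirac mass, `μₜ = (1 - t) μ + t δ_z`, moves the moment vector
`(μₜ(h₁), …, μₜ(hₙ))` affinely from `a = (μ(hᵢ))ᵢ` to `(hᵢ(z))ᵢ`. Differentiating
`f(μₜ(h)) = g(μₜ(k))` at `t = 0⁺` gives `Df(a)(h(z) - a) = Dg(b)(k(z) - b)` for every `z`, so the
two functions `z ↦ Σᵢ ∂ᵢf(a) hᵢ(z)` and `z ↦ Σⱼ ∂ⱼg(b) kⱼ(z)` differ by a constant and have the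
same gradient everywhere.
-/

open Set unitInterval

namespace MeasureTheory.ProbabilityMeasure

variable {X : Type*} [MeasurableSpace X]

def dirac (x : X) : ProbabilityMeasure X :=
  ⟨Measure.dirac x, inferInstance⟩

@[simp]
theorem toMeasure_dirac (x : X) : (dirac x).toMeasure = Measure.dirac x :=
  rfl

def mix (μ ν : ProbabilityMeasure X) (p : I) : ProbabilityMeasure X :=
  ⟨toNNReal p • μ.toMeasure + toNNReal (σ p) • ν.toMeasure, inferInstance⟩

theorem integral_mix {E : Type*} [NormedAddCommGroup E] [NormedSpace ℝ E]
    (μ ν : ProbabilityMeasure X) (p : I) {φ : X → E}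
    (hμ : Integrable φ μ.toMeasure) (hν : Integrable φ ν.toMeasure) :
    ∫ x, φ x ∂(μ.mix ν p).toMeasure
      = AffineMap.lineMap (∫ x, φ x ∂ν.toMeasure) (∫ x, φ x ∂μ.toMeasure) (p : ℝ) := by
  rw [AffineMap.lineMap_apply_module, ← coe_symm_eq, add_comm]
  exact (integral_add_measure hμ.smul_measure_nnreal hν.smul_measure_nnreal).trans
    (by rw [integral_smul_nnreal_measure, integral_smul_nnreal_measure]; rfl)

theorem integral_dirac_mix [MeasurableSingletonClass X] {E : Type*} [NormedAddCommGroup E]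
    [NormedSpace ℝ E] [CompleteSpace E] (z : X) (μ : ProbabilityMeasure X) (p : I) {φ : X → E}
    (hφ : Integrable φ μ.toMeasure) :
    ∫ x, φ x ∂((dirac z).mix μ p).toMeasure
      = AffineMap.lineMap (∫ x, φ x ∂μ.toMeasure) (φ z) (p : ℝ) := by
  rw [integral_mix _ _ _ (integrable_dirac enorm_lt_top) hφ, toMeasure_dirac, integral_dirac]

end MeasureTheory.ProbabilityMeasure

theorem DifferentiableAt.hasDerivAt_comp_lineMap {E G : Type*}
    [NormedAddCommGroup E] [NormedSpace ℝ E] [NormedAddCommGroup G] [NormedSpace ℝ G]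
    {f : E → G} {a a' : E} (hf : DifferentiableAt ℝ f a) :
    HasDerivAt (fun t : ℝ => f (AffineMap.lineMap a a' t)) (fderiv ℝ f a (a' - a)) 0 := by
  rw [← AffineMap.lineMap_apply_zero a a' (k := ℝ)] at hf
  have := hf.hasFDerivAt.comp_hasDerivAt 0 AffineMap.hasDerivAt_lineMap
  rwa [AffineMap.lineMap_apply_zero] at this

theorem fderiv_apply_sub_eq_of_comp_lineMap_eq {E F G : Type*}
    [NormedAddCommGroup E] [NormedSpace ℝ E] [NormedAddCommGroup F] [NormedSpace ℝ F]
    [NormedAddCommGroup G] [NormedSpace ℝ G] {f : E → G} {g : F → G} {a a' : E} {b b' : F}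
    (hf : DifferentiableAt ℝ f a) (hg : DifferentiableAt ℝ g b)
    (heq : ∀ t ∈ Icc (0 : ℝ) 1, f (AffineMap.lineMap a a' t) = g (AffineMap.lineMap b b' t)) :
    fderiv ℝ f a (a' - a) = fderiv ℝ g b (b' - b) :=
  (uniqueDiffOn_Icc_zero_one 0 (left_mem_Icc.2 zero_le_one)).eq_deriv _
    hf.hasDerivAt_comp_lineMap.hasDerivWithinAt
    (hg.hasDerivAt_comp_lineMap.hasDerivWithinAt.congr heq (heq 0 (left_mem_Icc.2 zero_le_one)))

theorem gradient_clm_apply_pi_sub_eq_sum {ι E : Type*} [Fintype ι] [DecidableEq ι]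
    [NormedAddCommGroup E] [InnerProductSpace ℝ E] [CompleteSpace E]
    (L : (ι → ℝ) →L[ℝ] ℝ) {φ : ι → E → ℝ} (a : ι → ℝ) {x : E}
    (hφ : ∀ i, DifferentiableAt ℝ (φ i) x) :
    gradient (fun z => L ((fun i => φ i z) - a)) x = ∑ i, L (Pi.single i 1) • gradient (φ i) x := by
  have hL : ∀ z, L ((fun i => φ i z) - a) = ∑ i, L (Pi.single i 1) * φ i z - L a := by
    intro z
    conv_lhs => rw [map_sub, pi_eq_sum_univ' fun i => φ i z]
    simp only [map_sum, map_smul, smul_eq_mul, mul_comm]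
  refine HasGradientAt.gradient ?_
  rw [funext hL, hasGradientAt_iff_hasFDerivAt, map_sum]
  simp only [map_smul, toDual_gradient]
  exact (HasFDerivAt.fun_sum fun i _ => (hφ i).hasFDerivAt.const_mul _).sub_const _

theorem intrinsic_gradient_well_defined_general {d : ℕ}
    (n l : ℕ)
    (f : (Fin n → ℝ) → ℝ) (g : (Fin l → ℝ) → ℝ)
    (h : Fin n → Rd d → ℝ) (k : Fin l → Rd d → ℝ)
    (hf : ContDiff ℝ 1 f)
    (hg : ContDiff ℝ 1 g)
    (hh : ∀ i, ContDiff ℝ 2 (h i) ∧ HasCompactSupport (h i))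
    (hk : ∀ j, ContDiff ℝ 2 (k j) ∧ HasCompactSupport (k j))
    (heq : ∀ μ : Prob d,
      f (fun i => ∫ x, h i x ∂μ.toMeasure) = g (fun j => ∫ x, k j x ∂μ.toMeasure)) :
    ∀ μ : Prob d, ∀ᵐ x ∂μ.toMeasure,
      ∑ i : Fin n,
          fderiv ℝ f (fun i' => ∫ y, h i' y ∂μ.toMeasure) (Pi.single i 1) • gradient (h i) x
        = ∑ j : Fin l,
            fderiv ℝ g (fun j' => ∫ y, k j' y ∂μ.toMeasure) (Pi.single j 1) • gradient (k j) x := by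
  intro μ
  refine .of_forall fun x => ?_
  set a : Fin n → ℝ := fun i => ∫ y, h i y ∂μ.toMeasure
  set b : Fin l → ℝ := fun j => ∫ y, k j y ∂μ.toMeasure
  have moments : ∀ {ι : Type} (φ : ι → Rd d → ℝ),
      (∀ i, Continuous (φ i) ∧ HasCompactSupport (φ i)) → ∀ z (t : I),
      (fun i => ∫ y, φ i y ∂((ProbabilityMeasure.dirac z).mix μ t).toMeasure)
        = AffineMap.lineMap (fun i => ∫ y, φ i y ∂μ.toMeasure) (fun i => φ i z) (t : ℝ) := by
    intro ι φ hφ z t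
    ext i
    rw [ProbabilityMeasure.integral_dirac_mix _ _ _
      ((hφ i).1.integrable_of_hasCompactSupport (hφ i).2)]
    simp only [AffineMap.lineMap_apply_module, Pi.add_apply, Pi.smul_apply]
  have hsegment : ∀ z, fderiv ℝ f a ((fun i => h i z) - a) = fderiv ℝ g b ((fun j => k j z) - b) :=
    fun z => fderiv_apply_sub_eq_of_comp_lineMap_eq (hf.differentiable one_ne_zero a)
      (hg.differentiable one_ne_zero b) fun t ht => by
        simpa only [moments h fun i => ⟨(hh i).1.continuous, (hh i).2⟩,
          moments k fun j => ⟨(hk j).1.continuous, (hk j).2⟩]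
          using heq ((ProbabilityMeasure.dirac z).mix μ ⟨t, ht⟩)
  rw [← gradient_clm_apply_pi_sub_eq_sum _ a fun i => (hh i).1.differentiable two_ne_zero x,
    ← gradient_clm_apply_pi_sub_eq_sum _ b fun j => (hk j).1.differentiable two_ne_zero x,
    funext hsegment]

/-- **Appendix, well-definedness of `∇^𝒫`.** If two cylinder-function
representations `f(μ(h₁),…,μ(hₙ))` and `g(μ(k₁),…,μ(k_l))` agree for all `μ ∈ 𝒫`, then
for every `μ ∈ 𝒫` the corresponding intrinsic gradients agree `μ`-a.e., i.e.
`Σ_i ∂_i f(μ(h₁),…,μ(hₙ)) ∇h_i = Σ_j ∂_j g(μ(k₁),…,μ(k_l)) ∇k_j` in `L²(ℝ^d→ℝ^d, μ)`. -/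
theorem intrinsic_gradient_well_defined {d : ℕ} (hd : 1 ≤ d)
    (n l : ℕ) (hn : 1 ≤ n) (hl : 1 ≤ l)
    (f : (Fin n → ℝ) → ℝ) (g : (Fin l → ℝ) → ℝ)
    (h : Fin n → Rd d → ℝ) (k : Fin l → Rd d → ℝ)
    (hf : ContDiff ℝ 1 f)
    (hfb : ∃ C : ℝ, ∀ y, |f y| ≤ C)
    (hfd : ∃ C : ℝ, ∀ y, ‖fderiv ℝ f y‖ ≤ C)
    (hg : ContDiff ℝ 1 g)
    (hgb : ∃ C : ℝ, ∀ y, |g y| ≤ C)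
    (hgd : ∃ C : ℝ, ∀ y, ‖fderiv ℝ g y‖ ≤ C)
    (hh : ∀ i, ContDiff ℝ 2 (h i) ∧ HasCompactSupport (h i))
    (hk : ∀ j, ContDiff ℝ 2 (k j) ∧ HasCompactSupport (k j))
    (heq : ∀ μ : Prob d,
      f (fun i => ∫ x, h i x ∂μ.toMeasure) = g (fun j => ∫ x, k j x ∂μ.toMeasure)) :
    ∀ μ : Prob d, ∀ᵐ x ∂μ.toMeasure,
      ∑ i : Fin n,
          fderiv ℝ f (fun i' => ∫ y, h i' y ∂μ.toMeasure) (Pi.single i 1) • gradient (h i) x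
        = ∑ j : Fin l,
            fderiv ℝ g (fun j' => ∫ y, k j' y ∂μ.toMeasure) (Pi.single j 1) • gradient (k j) x :=
  intrinsic_gradient_well_defined_general n l f g h k hf hg hh hk heq
end
end
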